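/- The Turing-machine encoding preserves configurations: for a Turing machine T with transition (q,b) → (q',c,right), applying the CWC rule q·(b·y ▹ (x ▹ Z)·Y)·X → (c·y ▹ q'·(x ▹ Z)·Y)·X to the term encoding a configuration with state q, head on symbol b, and nonempty right tape yields exactly the term encoding the successor configuration of T. -/
import Mathlib


namespace CWC

/-- CWC simple terms over atoms `A`: an atom, or a compartment `(wrap ▹ content)`. -/
inductive Tm (A : Type) : Type where
  | atom : A → Tm A
  | comp : List A → List (Tm A) → Tm A

/-- Structural congruence on CWC terms (lists of simple terms): the least
equivalence relation generated by swapping adjacent elements and by the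
congruence rule for compartments (closed under multiset union). -/
inductive Cong {A : Type} : List (Tm A) → List (Tm A) → Prop where
  | refl (t : List (Tm A)) : Cong t t
  | symm {t u : List (Tm A)} : Cong t u → Cong u t
  | trans {t u v : List (Tm A)} : Cong t u → Cong u v → Cong t v
  | swap (t1 : List (Tm A)) (u w : Tm A) (t2 : List (Tm A)) :
      Cong (t1 ++ u :: w :: t2) (t1 ++ w :: u :: t2)
  | comp {a b : List A} {t u : List (Tm A)} :
      a.Perm b → Cong t u → Cong [Tm.comp a t] [Tm.comp b u]
  | app {t u v w : List (Tm A)} : Cong t u → Cong v w → Cong (t ++ v) (u ++ w)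

/-- Simple terms up to structural congruence. -/
def tmSetoid (A : Type) : Setoid (Tm A) :=
  ⟨fun t u => Cong [t] [u], ⟨fun t => .refl [t], .symm, .trans⟩⟩

/-- The multiset of congruence classes of the components of a term. -/
def clsM {A : Type} (t : List (Tm A)) : Multiset (Quotient (tmSetoid A)) :=
  (t.map (Quotient.mk (tmSetoid A)) : List (Quotient (tmSetoid A)))

/-- CWC contexts: a hole, or a compartment containing a context, in parallel
with a term. -/
inductive Ctx (A : Type) : Type where
  | hole : Ctx A
  | node : List A → Ctx A → List (Tm A) → Ctx A

/-- Filling the hole of a context with a term. -/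
def Ctx.fill {A : Type} : Ctx A → List (Tm A) → List (Tm A)
  | .hole, t => t
  | .node a C v, t => Tm.comp a (C.fill t) :: v

/-- Context composition: replacing the hole of the first context by the second. -/
def Ctx.comp {A : Type} : Ctx A → Ctx A → Ctx A
  | .hole, C' => C'
  | .node a C v, C' => .node a (C.comp C') v

/-- The number of holes of a context. -/
def Ctx.holes {A : Type} : Ctx A → Nat
  | .hole => 1
  | .node _ C _ => C.holes

/-- Open simple terms: atoms, term variables, and compartments whose wrap may
contain wrap variables. -/
inductive OT (A : Type) : Type where
  | atom : A → OT A
  | tvar : Nat → OT A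
  | comp : List A → List Nat → List (OT A) → OT A

/-- An instantiation maps term variables to terms and wrap variables to
multisets of atoms. -/
structure Inst (A : Type) where
  tv : Nat → List (Tm A)
  wv : Nat → List A

mutual
/-- Substitution on open simple terms. -/
def substS {A : Type} (σ : Inst A) : OT A → List (Tm A)
  | .atom a => [.atom a]
  | .tvar X => σ.tv X
  | .comp a xs os => [Tm.comp (a ++ xs.flatMap σ.wv) (substL σ os)]
/-- Substitution on open terms. -/
def substL {A : Type} (σ : Inst A) : List (OT A) → List (Tm A)
  | [] => []
  | o :: os => substS σ o ++ substL σ os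
end

/-- A CWC system is a set of rewrite rules; the induced reduction relation is
generated by rule application in arbitrary contexts, closed under structural
congruence. -/
inductive Red {A : Type} (R : Set (List (OT A) × List (OT A))) :
    List (Tm A) → List (Tm A) → Prop where
  | step {P O : List (OT A)} (σ : Inst A) (C : Ctx A) :
      (P, O) ∈ R → Red R (C.fill (substL σ P)) (C.fill (substL σ O))
  | congr {t t' u u' : List (Tm A)} :
      Cong t t' → Red R t' u' → Cong u' u → Red R t u

mutual
/-- The list of atom occurrences of a simple term. -/
def atomsS {A : Type} : Tm A → List A
  | .atom a => [a]
  | .comp w t => w ++ atomsL t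
def atomsL {A : Type} : List (Tm A) → List A
  | [] => []
  | t :: ts => atomsS t ++ atomsL ts
end

mutual
/-- The list of atom occurrences of an open simple term. -/
def atomsOS {A : Type} : OT A → List A
  | .atom a => [a]
  | .tvar _ => []
  | .comp w _ t => w ++ atomsOL t
def atomsOL {A : Type} : List (OT A) → List A
  | [] => []
  | o :: os => atomsOS o ++ atomsOL os
end

mutual
/-- The list of term-variable occurrences of an open simple term. -/
def tvarsS {A : Type} : OT A → List Nat
  | .atom _ => []
  | .tvar X => [X]
  | .comp _ _ t => tvarsL t
def tvarsL {A : Type} : List (OT A) → List Nat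
  | [] => []
  | o :: os => tvarsS o ++ tvarsL os
end

mutual
/-- The list of wrap-variable occurrences of an open simple term. -/
def wvarsS {A : Type} : OT A → List Nat
  | .atom _ => []
  | .tvar _ => []
  | .comp _ xs t => xs ++ wvarsL t
def wvarsL {A : Type} : List (OT A) → List Nat
  | [] => []
  | o :: os => wvarsS o ++ wvarsL os
end

/-- A pattern is linear when each variable occurs at most once in it. -/
def Linear {A : Type} (P : List (OT A)) : Prop :=
  (∀ X : Nat, (tvarsL P).count X ≤ 1) ∧ (∀ x : Nat, (wvarsL P).count x ≤ 1)

/-- A labelled term (atoms of the form `(a, i)`) is completely labelled when no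
two occurrences of the same atom carry the same label. -/
def CompletelyLabeled {A : Type} (t : List (Tm (A × Nat))) : Prop :=
  (atomsL t).Nodup

mutual
/-- `LabS t t⁺` : the labelled simple term `t⁺` is obtained from `t` by
assigning labels to its atoms. -/
inductive LabS {A : Type} : Tm A → Tm (A × Nat) → Prop where
  | atom (a : A) (i : Nat) : LabS (.atom a) (.atom (a, i))
  | comp {w : List A} {w' : List (A × Nat)} {t : List (Tm A)} {t' : List (Tm (A × Nat))} :
      w'.map Prod.fst = w → LabL t t' → LabS (.comp w t) (.comp w' t')
inductive LabL {A : Type} : List (Tm A) → List (Tm (A × Nat)) → Prop where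
  | nil : LabL [] []
  | cons {t : Tm A} {t' : Tm (A × Nat)} {ts : List (Tm A)} {ts' : List (Tm (A × Nat))} :
      LabS t t' → LabL ts ts' → LabL (t :: ts) (t' :: ts')
end

mutual
/-- Erasure of labels from a labelled simple term. -/
def eraseS {A : Type} : Tm (A × Nat) → Tm A
  | .atom p => .atom p.1
  | .comp w t => .comp (w.map Prod.fst) (eraseL t)
def eraseL {A : Type} : List (Tm (A × Nat)) → List (Tm A)
  | [] => []
  | t :: ts => eraseS t :: eraseL ts
end

mutual
/-- Labelling of open simple terms (variables are unaffected). -/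
inductive LabOS {A : Type} : OT A → OT (A × Nat) → Prop where
  | atom (a : A) (i : Nat) : LabOS (.atom a) (.atom (a, i))
  | tvar (X : Nat) : LabOS (.tvar X) (.tvar X)
  | comp {w : List A} {w' : List (A × Nat)} {xs : List Nat}
      {t : List (OT A)} {t' : List (OT (A × Nat))} :
      w'.map Prod.fst = w → LabOL t t' → LabOS (.comp w xs t) (.comp w' xs t')
inductive LabOL {A : Type} : List (OT A) → List (OT (A × Nat)) → Prop where
  | nil : LabOL [] []
  | cons {o : OT A} {o' : OT (A × Nat)} {os : List (OT A)} {os' : List (OT (A × Nat))} :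
      LabOS o o' → LabOL os os' → LabOL (o :: os) (o' :: os')
end

/-- Erasure of labels from an instantiation. -/
def eraseInst {A : Type} (σ : Inst (A × Nat)) : Inst A :=
  ⟨fun X => eraseL (σ.tv X), fun x => (σ.wv x).map Prod.fst⟩

/-- The set of matching instantiations used in the canonical (mass action) rate
function: instantiations `σ` of the variables of `P` by labelled terms such
that `P'σ ≡ t⁺` for some labelling `P'` of `P` and `|Oσ| ≡ u`. -/
def MatchSet {A : Type} (P O : List (OT A)) (tp : List (Tm (A × Nat)))
    (u : List (Tm A)) : Set (Inst (A × Nat)) :=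
  {σ | (∀ X : Nat, X ∉ tvarsL P → σ.tv X = []) ∧
       (∀ x : Nat, x ∉ wvarsL P → σ.wv x = []) ∧
       (∃ P' : List (OT (A × Nat)), LabOL P P' ∧ Cong (substL σ P') tp) ∧
       Cong (substL (eraseInst σ) O) u}


/-- Encoding of the right suffix of the tape (head symbol first), ended by the
right marker `r`: each compartment's wrap holds one tape symbol and its content
encodes the rest of the suffix. -/
def encR {A : Type} (r : A) : List A → Tm A
  | [] => Tm.comp [r] []
  | b :: bs => Tm.comp [b] [encR r bs]

/-- Nesting of the left portion of the tape (leftmost symbol outermost) around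
an inner term. -/
def nest {A : Type} : List A → List (Tm A) → List (Tm A)
  | [], inner => inner
  | s :: ls, inner => [Tm.comp [s] (nest ls inner)]

/-- Encoding of a Turing machine configuration with left tape `left` (leftmost
first), state `q`, head symbol `hd` and right tape `right`; `l`, `r` are the
end-of-tape markers. -/
def encConf {A : Type} (l r : A) (left : List A) (q hd : A) (right : List A) :
    List (Tm A) :=
  [Tm.comp [l] (nest left (Tm.atom q :: [encR r (hd :: right)]))]

/-- The CWC rule `q·(b·y ▹ (x ▹ Z)·Y)·X ↦ (c·y ▹ q'·(x ▹ Z)·Y)·X` encoding the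
machine transition `(q,b) → (q',c,right)` (nonempty right tape case), with wrap
variables `y = 0`, `x = 1` and term variables `Z = 0`, `Y = 1`, `X = 2`. -/
def tmRule {A : Type} (q b q' c : A) : List (OT A) × List (OT A) :=
  ([OT.atom q,
    OT.comp [b] [0] [OT.comp [] [1] [OT.tvar 0], OT.tvar 1],
    OT.tvar 2],
   [OT.comp [c] [0] [OT.atom q', OT.comp [] [1] [OT.tvar 0], OT.tvar 1],
    OT.tvar 2])

mutual
/-- Number of occurrences of state atoms (atoms in `Q`) in a simple term. -/
def stCountS {A : Type} (Q : A → Prop) [DecidablePred Q] : Tm A → Nat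
  | .atom a => if Q a then 1 else 0
  | .comp w t => (w.countP fun a => decide (Q a)) + stCountL Q t
def stCountL {A : Type} (Q : A → Prop) [DecidablePred Q] : List (Tm A) → Nat
  | [] => 0
  | t :: ts => stCountS Q t + stCountL Q ts
end

mutual
/-- Number of occurrences of state atoms in an open simple term. -/
def stCountOS {A : Type} (Q : A → Prop) [DecidablePred Q] : OT A → Nat
  | .atom a => if Q a then 1 else 0
  | .tvar _ => 0
  | .comp w _ t => (w.countP fun a => decide (Q a)) + stCountOL Q t
def stCountOL {A : Type} (Q : A → Prop) [DecidablePred Q] : List (OT A) → Nat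
  | [] => 0
  | o :: os => stCountOS Q o + stCountOL Q os
end



/-! ### Auxiliary machinery: a structural characterization of `Cong` -/

mutual
/-- Structural form of congruence on simple terms. -/
def rel {A : Type} : Tm A → Tm A → Prop
  | .atom a, .atom b => a = b
  | .comp a t, .comp b u => a.Perm b ∧ relL t u
  | .atom _, .comp _ _ => False
  | .comp _ _, .atom _ => False
/-- Structural form of congruence on lists of simple terms. -/
def relL {A : Type} : List (Tm A) → List (Tm A) → Prop
  | [], u => u = []
  | x :: t, u => ∃ y u1 u2, u = u1 ++ y :: u2 ∧ rel x y ∧ relL t (u1 ++ u2)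
end

variable {A : Type}

theorem coe_middle (y : Tm A) (u1 u2 : List (Tm A)) :
    (↑(u1 ++ y :: u2) : Multiset (Tm A)) = y ::ₘ ↑(u1 ++ u2) := by
  rw [Multiset.cons_coe, Multiset.coe_eq_coe]
  exact List.perm_middle

theorem relL_iff : ∀ (t u : List (Tm A)),
    relL t u ↔ Multiset.Rel rel (t : Multiset (Tm A)) (u : Multiset (Tm A)) := by
  intro t
  induction t with
  | nil =>
    intro u
    simp only [relL, Multiset.coe_nil, Multiset.rel_zero_left, Multiset.coe_eq_zero]
  | cons x t ih =>
    intro u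
    rw [relL, show ((↑(x :: t) : Multiset (Tm A)) = x ::ₘ ↑t) from rfl,
      Multiset.rel_cons_left]
    constructor
    · rintro ⟨y, u1, u2, rfl, hxy, hrest⟩
      exact ⟨y, ↑(u1 ++ u2), hxy, (ih _).mp hrest, coe_middle y u1 u2⟩
    · rintro ⟨b, bs', hxb, hrest, hu⟩
      have hb : b ∈ u := by
        have : b ∈ (↑u : Multiset (Tm A)) := by rw [hu]; exact Multiset.mem_cons_self _ _
        exact_mod_cast this
      obtain ⟨u1, u2, rfl⟩ := List.append_of_mem hb
      have hbs : bs' = ↑(u1 ++ u2) := by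
        have h2 := hu.symm.trans (coe_middle b u1 u2)
        exact (Multiset.cons_inj_right b).mp h2
      exact ⟨b, u1, u2, rfl, hxb, (ih _).mpr (hbs ▸ hrest)⟩

mutual
theorem rel_refl : ∀ (x : Tm A), rel x x
  | .atom a => by rw [rel]
  | .comp a t => by rw [rel]; exact ⟨List.Perm.refl a, relL_refl t⟩
theorem relL_refl : ∀ (t : List (Tm A)), relL t t
  | [] => by rw [relL]
  | x :: t => by rw [relL]; exact ⟨x, [], t, rfl, rel_refl x, relL_refl t⟩
end

theorem relM_symm_aux {s t : Multiset (Tm A)} (h : Multiset.Rel rel s t)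
    (hs : ∀ x ∈ s, ∀ y, rel x y → rel y x) : Multiset.Rel rel t s := by
  induction h with
  | zero => exact .zero
  | @cons a b as bs hab _ ih =>
    exact .cons (hs a (Multiset.mem_cons_self _ _) b hab)
      (ih fun x hx y hxy => hs x (Multiset.mem_cons_of_mem hx) y hxy)

theorem relM_trans_aux : ∀ (s t u : Multiset (Tm A)),
    (∀ x ∈ s, ∀ y z, rel x y → rel y z → rel x z) →
    Multiset.Rel rel s t → Multiset.Rel rel t u → Multiset.Rel rel s u := by
  intro s
  induction s using Multiset.induction_on with
  | empty =>
    intro t u _ h1 h2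
    rw [Multiset.rel_zero_left] at h1; subst h1
    rw [Multiset.rel_zero_left] at h2; subst h2; exact .zero
  | @cons a s ih =>
    intro t u hIH h1 h2
    obtain ⟨b, bs, hab, h1', rfl⟩ := Multiset.rel_cons_left.mp h1
    obtain ⟨c, cs, hbc, h2', rfl⟩ := Multiset.rel_cons_left.mp h2
    exact .cons (hIH a (Multiset.mem_cons_self _ _) b c hab hbc)
      (ih bs cs (fun x hx => hIH x (Multiset.mem_cons_of_mem hx)) h1' h2')

theorem rel_symm : ∀ {x y : Tm A}, rel x y → rel y x := by
  have key : ∀ n (x y : Tm A), sizeOf x ≤ n → rel x y → rel y x := by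
    intro n
    induction n using Nat.strong_induction_on with
    | _ n ih =>
      intro x y hle hxy
      match x, y with
      | .atom a, .atom b => rw [rel] at hxy ⊢; exact hxy.symm
      | .atom a, .comp _ _ => rw [rel] at hxy; exact hxy.elim
      | .comp _ _, .atom _ => rw [rel] at hxy; exact hxy.elim
      | .comp a t, .comp b u =>
        rw [rel] at hxy ⊢
        refine ⟨hxy.1.symm, ?_⟩
        rw [relL_iff] at *
        refine relM_symm_aux (hxy.2) ?_
        intro z hz w hzw
        have hz' : z ∈ t := by exact_mod_cast hz
        have hlt : sizeOf z < sizeOf (Tm.comp a t) := by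
          have := List.sizeOf_lt_of_mem hz'
          simp only [Tm.comp.sizeOf_spec]; omega
        exact ih (sizeOf z) (lt_of_lt_of_le hlt hle) z w le_rfl hzw
  exact fun {x y} h => key (sizeOf x) x y le_rfl h

theorem rel_trans : ∀ {x y z : Tm A}, rel x y → rel y z → rel x z := by
  have key : ∀ n (x y z : Tm A), sizeOf x ≤ n → rel x y → rel y z → rel x z := by
    intro n
    induction n using Nat.strong_induction_on with
    | _ n ih =>
      intro x y z hle hxy hyz
      match x, y, z with
      | .atom a, .atom b, .atom c => rw [rel] at *; exact hxy.trans hyz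
      | .atom _, .atom _, .comp _ _ => rw [rel] at hyz; exact hyz.elim
      | .atom _, .comp _ _, _ => rw [rel] at hxy; exact hxy.elim
      | .comp _ _, .atom _, _ => rw [rel] at hxy; exact hxy.elim
      | .comp _ _, .comp _ _, .atom _ => rw [rel] at hyz; exact hyz.elim
      | .comp a t, .comp b u, .comp c v =>
        rw [rel] at hxy hyz ⊢
        refine ⟨hxy.1.trans hyz.1, ?_⟩
        rw [relL_iff] at *
        refine relM_trans_aux _ _ _ ?_ hxy.2 hyz.2
        intro w hw y' z' h1 h2
        have hw' : w ∈ t := by exact_mod_cast hw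
        have hlt : sizeOf w < sizeOf (Tm.comp a t) := by
          have := List.sizeOf_lt_of_mem hw'
          simp only [Tm.comp.sizeOf_spec]; omega
        exact ih (sizeOf w) (lt_of_lt_of_le hlt hle) w y' z' le_rfl h1 h2
  exact fun {x y z} h1 h2 => key (sizeOf x) x y z le_rfl h1 h2

theorem cong_of_perm {t u : List (Tm A)} (h : t.Perm u) : Cong t u := by
  induction h with
  | nil => exact .refl []
  | @cons x l₁ l₂ _ ih => exact (Cong.app (Cong.refl [x]) ih : Cong ([x] ++ l₁) ([x] ++ l₂))
  | swap x y l => exact Cong.swap [] y x l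
  | trans _ _ ih1 ih2 => exact ih1.trans ih2

theorem cong_to_relM {t u : List (Tm A)} (h : Cong t u) :
    Multiset.Rel rel (t : Multiset (Tm A)) (u : Multiset (Tm A)) := by
  induction h with
  | refl t => exact Multiset.rel_refl_of_refl_on (fun x _ => rel_refl x)
  | symm _ ih => exact relM_symm_aux ih (fun x _ y => rel_symm)
  | trans _ _ ih1 ih2 => exact relM_trans_aux _ _ _ (fun x _ y z => rel_trans) ih1 ih2
  | swap t1 a b t2 =>
    have hc : ((t1 ++ a :: b :: t2 : List (Tm A)) : Multiset (Tm A)) = ↑(t1 ++ b :: a :: t2) :=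
      Multiset.coe_eq_coe.mpr (List.Perm.append_left t1 (List.Perm.swap b a t2))
    rw [hc]; exact Multiset.rel_refl_of_refl_on (fun x _ => rel_refl x)
  | @comp a b t u hp _ ih =>
    have hx : rel (Tm.comp a t) (Tm.comp b u) := by
      rw [rel]; exact ⟨hp, (relL_iff _ _).mpr ih⟩
    exact Multiset.Rel.cons hx Multiset.Rel.zero
  | @app t u v w _ _ ih1 ih2 =>
    have h1 : ((t ++ v : List (Tm A)) : Multiset (Tm A)) = ↑t + ↑v := by
      simp
    have h2 : ((u ++ w : List (Tm A)) : Multiset (Tm A)) = ↑u + ↑w := by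
      simp
    rw [h1, h2]; exact ih1.add ih2

theorem relL_of_cong {t u : List (Tm A)} (h : Cong t u) : relL t u :=
  (relL_iff _ _).mpr (cong_to_relM h)

theorem cong_of_relL : ∀ {t u : List (Tm A)}, relL t u → Cong t u := by
  have key : ∀ n (t u : List (Tm A)), sizeOf t ≤ n → relL t u → Cong t u := by
    intro n
    induction n using Nat.strong_induction_on with
    | _ n ih =>
      intro t u hle h
      match t with
      | [] => rw [relL] at h; subst h; exact .refl []
      | x :: t' =>
        rw [relL] at h
        obtain ⟨y, u1, u2, rfl, hxy, hrest⟩ := h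
        have hxbound : sizeOf x < n := by
          have : sizeOf x < sizeOf (x :: t' : List (Tm A)) := by
            simp only [List.cons.sizeOf_spec]; omega
          omega
        have hx : Cong [x] [y] := by
          match x, y, hxbound, hxy with
          | .atom a, .atom b, _, hxy => rw [rel] at hxy; subst hxy; exact .refl _
          | .atom _, .comp _ _, _, hxy => rw [rel] at hxy; exact hxy.elim
          | .comp _ _, .atom _, _, hxy => rw [rel] at hxy; exact hxy.elim
          | .comp a tt, .comp b uu, hxb, hxy =>
            rw [rel] at hxy
            refine Cong.comp hxy.1 ?_
            have hlt : sizeOf tt < sizeOf (Tm.comp a tt) := by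
              simp only [Tm.comp.sizeOf_spec]; omega
            exact ih (sizeOf tt) (by omega) tt uu le_rfl hxy.2
        have ht' : Cong t' (u1 ++ u2) := by
          have hlt : sizeOf t' < sizeOf (x :: t' : List (Tm A)) := by
            simp only [List.cons.sizeOf_spec]; omega
          exact ih (sizeOf t') (lt_of_lt_of_le hlt hle) t' (u1 ++ u2) le_rfl hrest
        have hc : Cong (x :: t') (y :: (u1 ++ u2)) :=
          (Cong.app hx ht' : Cong ([x] ++ t') ([y] ++ (u1 ++ u2)))
        exact hc.trans (cong_of_perm List.perm_middle.symm)
  exact fun {t u} h => key (sizeOf t) t u le_rfl h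

theorem cong_length {t u : List (Tm A)} (h : Cong t u) : t.length = u.length := by
  have := Multiset.card_eq_card_of_rel (cong_to_relM h)
  simpa using this

theorem relL_single {x : Tm A} {u : List (Tm A)} (h : relL [x] u) :
    ∃ y, u = [y] ∧ rel x y := by
  rw [relL] at h
  obtain ⟨y, u1, u2, rfl, hxy, h0⟩ := h
  rw [relL] at h0
  obtain ⟨rfl, rfl⟩ := List.append_eq_nil_iff.mp h0
  exact ⟨y, rfl, hxy⟩

theorem relL_pair {x1 x2 : Tm A} {u : List (Tm A)} (h : relL [x1, x2] u) :
    ∃ y1 y2, u = [y1, y2] ∧ ((rel x1 y1 ∧ rel x2 y2) ∨ (rel x1 y2 ∧ rel x2 y1)) := by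
  rw [relL] at h
  obtain ⟨y, u1, u2, rfl, h1, hrest⟩ := h
  obtain ⟨z, hz, h2⟩ := relL_single hrest
  match u1 with
  | [] =>
    subst hz
    exact ⟨y, z, rfl, Or.inl ⟨h1, h2⟩⟩
  | a :: u1' =>
    rw [List.cons_append] at hz
    injection hz with ha htl
    subst ha
    obtain ⟨rfl, rfl⟩ := List.append_eq_nil_iff.mp htl
    exact ⟨a, y, rfl, Or.inr ⟨h1, h2⟩⟩

/-! ### Atom counting -/

theorem atomsL_append : ∀ (t u : List (Tm A)), atomsL (t ++ u) = atomsL t ++ atomsL u := by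
  intro t u
  induction t with
  | nil => simp [atomsL]
  | cons x t ih => simp [atomsL, ih]

theorem atomsL_cons (x : Tm A) (ts : List (Tm A)) :
    atomsL (x :: ts) = atomsS x ++ atomsL ts := by rw [atomsL]

theorem atomsL_nil : atomsL ([] : List (Tm A)) = [] := by rw [atomsL]

theorem atomsS_atom (a : A) : atomsS (Tm.atom a) = [a] := by rw [atomsS]

theorem atomsS_comp (w : List A) (t : List (Tm A)) :
    atomsS (Tm.comp w t) = w ++ atomsL t := by rw [atomsS]

theorem cong_atoms {t u : List (Tm A)} (h : Cong t u) : (atomsL t).Perm (atomsL u) := by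
  induction h with
  | refl t => exact List.Perm.refl _
  | symm _ ih => exact ih.symm
  | trans _ _ ih1 ih2 => exact ih1.trans ih2
  | swap t1 a b t2 =>
    rw [atomsL_append, atomsL_append]
    refine List.Perm.append_left _ ?_
    show (atomsL (a :: b :: t2)).Perm (atomsL (b :: a :: t2))
    rw [show atomsL (a :: b :: t2) = atomsS a ++ (atomsS b ++ atomsL t2) from rfl,
      show atomsL (b :: a :: t2) = atomsS b ++ (atomsS a ++ atomsL t2) from rfl,
      ← List.append_assoc, ← List.append_assoc]
    exact List.Perm.append_right _ (List.perm_append_comm)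
  | @comp a b t u hp _ ih =>
    show ((a ++ atomsL t) ++ atomsL []).Perm ((b ++ atomsL u) ++ atomsL [])
    simpa [atomsL] using hp.append ih
  | app _ _ ih1 ih2 =>
    rw [atomsL_append, atomsL_append]
    exact ih1.append ih2

theorem count_fill (q : A) [DecidableEq A] : ∀ (C : Ctx A) (t : List (Tm A)),
    (atomsL t).count q ≤ (atomsL (C.fill t)).count q := by
  intro C
  induction C with
  | hole => intro t; simp [Ctx.fill]
  | node a C v ih =>
    intro t
    show _ ≤ (atomsL (Tm.comp a (C.fill t) :: v)).count q
    rw [show atomsL (Tm.comp a (C.fill t) :: v) = (a ++ atomsL (C.fill t)) ++ atomsL v from rfl]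
    have := ih t
    simp only [List.count_append]
    omega

/-! ### Computation lemmas for the rule and the encoding -/

theorem substP_eq (q b q' c : A) (σ : Inst A) :
    substL σ (tmRule q b q' c).1 =
      Tm.atom q :: Tm.comp (b :: σ.wv 0) (Tm.comp (σ.wv 1) (σ.tv 0) :: σ.tv 1) :: σ.tv 2 := by
  simp [tmRule, substL, substS]

theorem substO_eq (q b q' c : A) (σ : Inst A) :
    substL σ (tmRule q b q' c).2 =
      Tm.comp (c :: σ.wv 0) (Tm.atom q' :: Tm.comp (σ.wv 1) (σ.tv 0) :: σ.tv 1) :: σ.tv 2 := by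
  simp [tmRule, substL, substS]

theorem atoms_encR (r : A) : ∀ (xs : List A), atomsS (encR r xs) = xs ++ [r] := by
  intro xs
  induction xs with
  | nil => simp [encR, atomsS, atomsL]
  | cons x xs ih => simp [encR, atomsS, atomsL, ih]

theorem nest_append (a b : List A) (i : List (Tm A)) :
    nest (a ++ b) i = nest a (nest b i) := by
  induction a with
  | nil => simp [nest]
  | cons x a ih => simp [nest, ih]

/-- Context whose hole is at the bottom of a nest. -/
def ctxOf : List A → Ctx A
  | [] => .hole
  | a :: ls => .node [a] (ctxOf ls) []

theorem ctxOf_fill : ∀ (ls : List A) (t : List (Tm A)), (ctxOf ls).fill t = nest ls t := by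
  intro ls
  induction ls with
  | nil => intro t; simp [ctxOf, Ctx.fill, nest]
  | cons a ls ih => intro t; simp [ctxOf, Ctx.fill, nest, ih]

theorem red_elim {R : Set (List (OT A) × List (OT A))} {t u : List (Tm A)} (h : Red R t u) :
    ∃ (P O : List (OT A)) (σ : Inst A) (C : Ctx A),
      (P, O) ∈ R ∧ Cong t (C.fill (substL σ P)) ∧ Cong (C.fill (substL σ O)) u := by
  induction h with
  | @step P O σ C hmem => exact ⟨P, O, σ, C, hmem, .refl _, .refl _⟩
  | congr h1 _ h2 ih =>
    obtain ⟨P, O, σ, C, hm, c1, c2⟩ := ih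
    exact ⟨P, O, σ, C, hm, h1.trans c1, c2.trans h2⟩

/-! ### The key uniqueness lemma -/

theorem main_aux (q b q' c r s : A) (right : List A)
    (hqb : q ≠ b) (hqs : q ≠ s) (hqr : q ≠ r) (hqright : q ∉ right) :
    ∀ (ls : List A) (C : Ctx A) (σ : Inst A), q ∉ ls →
    Cong (nest ls (Tm.atom q :: [encR r (b :: s :: right)]))
      (C.fill (substL σ (tmRule q b q' c).1)) →
    Cong (C.fill (substL σ (tmRule q b q' c).2))
      (nest ls [Tm.comp [c] (Tm.atom q' :: [encR r (s :: right)])]) := by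
  classical
  intro ls
  induction ls with
  | nil =>
    intro C σ _ h
    rw [show nest [] (Tm.atom q :: [encR r (b :: s :: right)]) =
      [Tm.atom q, encR r (b :: s :: right)] from rfl] at h
    match C with
    | .hole =>
      rw [Ctx.fill, substP_eq] at h
      -- lengths force σ.tv 2 = []
      have hlen := cong_length h
      simp only [List.length_cons, List.length] at hlen
      have htv2 : σ.tv 2 = [] := by
        cases h2 : σ.tv 2 with
        | nil => rfl
        | cons _ _ => rw [h2] at hlen; simp at hlen
      rw [htv2] at h
      obtain ⟨y1, y2, heq, hcase⟩ := relL_pair (relL_of_cong h)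
      injection heq with e1 e2
      injection e2 with e3 _
      subst e1; subst e3
      have hEK : rel (encR r (b :: s :: right))
          (Tm.comp (b :: σ.wv 0) (Tm.comp (σ.wv 1) (σ.tv 0) :: σ.tv 1)) := by
        rcases hcase with ⟨_, h2⟩ | ⟨h1, _⟩
        · exact h2
        · rw [rel] at h1; exact h1.elim
      rw [show encR r (b :: s :: right) = Tm.comp [b] [encR r (s :: right)] from rfl,
        rel] at hEK
      obtain ⟨hperm, hcont⟩ := hEK
      have hwv0 : σ.wv 0 = [] := by
        have h2 := hperm.length_eq
        simp only [List.length_cons, List.length_nil] at h2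
        exact List.length_eq_zero_iff.mp (by omega)
      obtain ⟨y, hy, hrelE'⟩ := relL_single hcont
      injection hy with e4 htv1
      subst e4
      rw [show encR r (s :: right) = Tm.comp [s] [encR r right] from rfl, rel] at hrelE'
      obtain ⟨hperm1, hZ⟩ := hrelE'
      have hwv1 : σ.wv 1 = [s] := (List.singleton_perm.mp hperm1).symm
      have hZc : Cong [encR r right] (σ.tv 0) := cong_of_relL hZ
      rw [Ctx.fill, substO_eq, hwv0, hwv1, htv1, htv2]
      rw [show nest [] [Tm.comp [c] (Tm.atom q' :: [encR r (s :: right)])] =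
        [Tm.comp [c] (Tm.atom q' :: [encR r (s :: right)])] from rfl]
      refine Cong.comp (List.Perm.refl [c]) ?_
      have hbody : Cong ([Tm.atom q'] ++ [Tm.comp [s] (σ.tv 0)])
          ([Tm.atom q'] ++ [Tm.comp [s] [encR r right]]) :=
        Cong.app (Cong.refl [Tm.atom q']) (Cong.comp (List.Perm.refl [s]) hZc.symm)
      exact hbody
    | .node w C' v =>
      rw [Ctx.fill] at h
      -- lengths force v = [v0]
      have hlen := cong_length h
      simp only [List.length_cons, List.length] at hlen
      obtain ⟨v0, rfl⟩ : ∃ v0, v = [v0] := by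
        cases v with
        | nil => simp at hlen
        | cons a v' =>
          cases v' with
          | nil => exact ⟨a, rfl⟩
          | cons _ _ => simp at hlen
      obtain ⟨y1, y2, heq, hcase⟩ := relL_pair (relL_of_cong h)
      injection heq with e1 e2
      injection e2 with e3 _
      subst e1; subst e3
      have hqv : rel (Tm.atom q) v0 := by
        rcases hcase with ⟨h1, _⟩ | ⟨h1, _⟩
        · rw [rel] at h1; exact h1.elim
        · exact h1
      obtain rfl : v0 = Tm.atom q := by
        match v0, hqv with
        | .atom a0, hqv => rw [rel] at hqv; rw [hqv]
        | .comp _ _, hqv => rw [rel] at hqv; exact hqv.elim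
      -- count the occurrences of q on both sides
      exfalso
      have hat := cong_atoms h
      have hcnt := hat.count_eq q
      have hnotmem : q ∉ (b :: s :: right) ++ [r] := by
        intro hmem
        simp only [List.cons_append, List.mem_cons, List.mem_append,
          List.not_mem_nil, or_false] at hmem
        rcases hmem with rfl | rfl | hmem | rfl
        · exact hqb rfl
        · exact hqs rfl
        · exact hqright hmem
        · exact hqr rfl
      have hL : (atomsL [Tm.atom q, encR r (b :: s :: right)]).count q = 1 := by
        have e : atomsL [Tm.atom q, encR r (b :: s :: right)] =
            q :: ((b :: s :: right) ++ [r]) := by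
          simp only [atomsL_cons, atomsL_nil, atomsS_atom, atoms_encR,
            List.append_nil, List.singleton_append]
        rw [e, List.count_cons_self, List.count_eq_zero_of_not_mem hnotmem]
      have hfill : 1 ≤ (atomsL (C'.fill (substL σ (tmRule q b q' c).1))).count q := by
        refine le_trans ?_ (count_fill q C' _)
        rw [substP_eq]
        simp only [atomsL_cons, atomsS_atom, List.singleton_append]
        rw [List.count_cons_self]
        omega
      have hR : 2 ≤ (atomsL
          (Tm.comp w (C'.fill (substL σ (tmRule q b q' c).1)) :: [Tm.atom q])).count q := by
        have e : atomsL (Tm.comp w (C'.fill (substL σ (tmRule q b q' c).1)) :: [Tm.atom q]) =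
            (w ++ atomsL (C'.fill (substL σ (tmRule q b q' c).1))) ++ [q] := by
          simp only [atomsL_cons, atomsL_nil, atomsS_atom, atomsS_comp, List.append_nil]
        rw [e]
        simp only [List.count_append]
        have h1 : (List.count q [q]) = 1 := by simp
        omega
      omega
  | cons a ls ih =>
    intro C σ hnots h
    have hqa : q ≠ a := by simp at hnots; exact hnots.1
    have hnots' : q ∉ ls := by simp at hnots; exact hnots.2
    rw [show nest (a :: ls) (Tm.atom q :: [encR r (b :: s :: right)]) =
      [Tm.comp [a] (nest ls (Tm.atom q :: [encR r (b :: s :: right)]))] from rfl] at h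
    match C with
    | .hole =>
      rw [Ctx.fill, substP_eq] at h
      have hlen := cong_length h
      simp at hlen
    | .node w C' v =>
      rw [Ctx.fill] at h
      have hlen := cong_length h
      simp only [List.length_cons, List.length] at hlen
      have hv : v = [] := by
        cases v with
        | nil => rfl
        | cons _ _ => simp at hlen
      subst hv
      obtain ⟨y, hy, hrel⟩ := relL_single (relL_of_cong h)
      obtain rfl : y = Tm.comp w (C'.fill (substL σ (tmRule q b q' c).1)) := by
        simpa using hy.symm
      rw [rel] at hrel
      obtain ⟨hperm, hcont⟩ := hrel
      have hw : w = [a] := (List.singleton_perm.mp hperm).symm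
      subst hw
      have hC' : Cong (nest ls (Tm.atom q :: [encR r (b :: s :: right)]))
          (C'.fill (substL σ (tmRule q b q' c).1)) := cong_of_relL hcont
      have hIH := ih C' σ hnots' hC'
      rw [Ctx.fill]
      rw [show nest (a :: ls) [Tm.comp [c] (Tm.atom q' :: [encR r (s :: right)])] =
        [Tm.comp [a] (nest ls [Tm.comp [c] (Tm.atom q' :: [encR r (s :: right)])])] from rfl]
      exact Cong.comp (List.Perm.refl [a]) hIH


/-- The Turing-machine encoding preserves configurations: applying the rule
encoding `(q,b) → (q',c,right)` to the encoding of a configuration with state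
`q`, head on `b` and nonempty right tape yields exactly the encoding of the
successor configuration. -/
theorem tm_encoding_preserves {A : Type} (l r q q' b c s : A)
    (left right : List A) (hql : q ≠ l) (hqr : q ≠ r) (hqb : q ≠ b) (hqs : q ≠ s)
    (hqleft : q ∉ left) (hqright : q ∉ right) :
    Red {tmRule q b q' c} (encConf l r left q b (s :: right))
      (encConf l r (left ++ [c]) q' s right) ∧
    ∀ u : List (Tm A), Red {tmRule q b q' c} (encConf l r left q b (s :: right)) u →
      Cong u (encConf l r (left ++ [c]) q' s right) := by
  classical
  have σ₀ : Inst A := ⟨fun n => if n = 0 then [encR r right] else [],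
    fun n => if n = 1 then [s] else []⟩
  constructor
  · -- existence of the reduction
    refine ?_
    let σ₀ : Inst A := ⟨fun n => if n = 0 then [encR r right] else [],
      fun n => if n = 1 then [s] else []⟩
    have e1 : (Ctx.node [l] (ctxOf left) []).fill (substL σ₀ (tmRule q b q' c).1) =
        encConf l r left q b (s :: right) := by
      simp only [Ctx.fill]
      rw [ctxOf_fill, substP_eq]
      simp [σ₀, encConf, encR]
    have e2 : (Ctx.node [l] (ctxOf left) []).fill (substL σ₀ (tmRule q b q' c).2) =
        encConf l r (left ++ [c]) q' s right := by
      simp only [Ctx.fill]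
      rw [ctxOf_fill, substO_eq]
      simp [σ₀, encConf, encR, nest_append, nest]
    have hstep := Red.step (R := ({tmRule q b q' c} : Set _))
      (P := (tmRule q b q' c).1) (O := (tmRule q b q' c).2) σ₀
      (Ctx.node [l] (ctxOf left) []) rfl
    rw [e1, e2] at hstep
    exact hstep
  · -- uniqueness up to congruence
    intro u hred
    obtain ⟨P, O, σ, C, hm, c1, c2⟩ := red_elim hred
    rw [Set.mem_singleton_iff] at hm
    have hP : P = (tmRule q b q' c).1 := by rw [← hm]
    have hO : O = (tmRule q b q' c).2 := by rw [← hm]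
    subst hP; subst hO
    have henc : encConf l r left q b (s :: right) =
        nest (l :: left) (Tm.atom q :: [encR r (b :: s :: right)]) := rfl
    rw [henc] at c1
    have hnotls : q ∉ (l :: left) := by simp [hql, hqleft]
    have hmain := main_aux q b q' c r s right hqb hqs hqr hqright (l :: left) C σ hnotls c1
    have htarget : nest (l :: left) [Tm.comp [c] (Tm.atom q' :: [encR r (s :: right)])] =
        encConf l r (left ++ [c]) q' s right := by
      rw [show encConf l r (left ++ [c]) q' s right =
        nest (l :: (left ++ [c])) (Tm.atom q' :: [encR r (s :: right)]) from rfl]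
      rw [show (l :: (left ++ [c])) = (l :: left) ++ [c] from rfl, nest_append]
      rfl
    rw [htarget] at hmain
    exact c2.symm.trans hmain

end CWC
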